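/- Let d be an odd prime, n ≥ 1, Γ a symmetric n×n matrix over ZMod d with zero diagonal, ω : ℂ a primitive d-th root of unity, and ψ_Γ the graph-state amplitude function. Then for every w : Fin n, every γ : ZMod d, and every x : Fin n → ZMod d, ψ_{Γ ⋆_γ w}(x) = ω^(γ · 2⁻¹ · ((Σ_u Γ u w · x u)² − Σ_u (Γ u w)² · (x u)²)) · ψ_Γ(x), where 2⁻¹ is the inverse of 2 in ZMod d. In particular, the graph states of Γ ⋆_γ w and Γ differ only by a phase function of x that depends on Γ only through its w-th column. -/

import Mathlib

/-!
Local complementation adds `γ · Γ u w · Γ v w` to each off-diagonal entry, so with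
`a u = Γ u w · x u` the exponent of the graph state grows by `γ · Σ_{u<v} a u · a v`.
Since `d` is odd, `2` is invertible in `ZMod d`, and this off-diagonal sum is
`2⁻¹ · ((Σ a)² - Σ a²)`. Finally `k ↦ ω ^ k.val` is multiplicative on `ZMod d` because `ω ^ d = 1`.
-/

/-- The graph-state amplitude function of an adjacency matrix `Γ` over `ZMod d`. -/
noncomputable def graphState (d n : ℕ) (ω : ℂ) (Γ : Matrix (Fin n) (Fin n) (ZMod d)) :
    (Fin n → ZMod d) → ℂ := fun x =>
  (((d : ℝ) ^ (-(n : ℝ) / 2) : ℝ) : ℂ) *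
    ω ^ (∑ u : Fin n, ∑ v : Fin n, if u < v then Γ u v * x u * x v else 0).val

/-- The `γ`-local complementation of `Γ` about the vertex `w`. -/
def localComp {d n : ℕ} (Γ : Matrix (Fin n) (Fin n) (ZMod d)) (γ : ZMod d) (w : Fin n) :
    Matrix (Fin n) (Fin n) (ZMod d) :=
  Matrix.of fun u v => if u ≠ v then Γ u v + γ * Γ u w * Γ v w else Γ u v

open Finset

theorem pow_zmod_val_add {M : Type*} [Monoid M] {d : ℕ} [NeZero d] {ω : M} (hω : ω ^ d = 1)
    (a b : ZMod d) : ω ^ (a + b).val = ω ^ a.val * ω ^ b.val := by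
  rw [ZMod.val_add, ← pow_eq_pow_mod _ hω, pow_add]

theorem ZMod.two_mul_inv_two_of_odd {d : ℕ} (hd : Odd d) : (2 : ZMod d) * 2⁻¹ = 1 := by
  exact_mod_cast ZMod.coe_mul_inv_eq_one 2 (Nat.coprime_two_left.mpr hd)

theorem sq_sum_eq_sum_sq_add_two_mul_sum_lt {ι R : Type*} [CommSemiring R] [Fintype ι]
    [LinearOrder ι] (a : ι → R) :
    (∑ i, a i) ^ 2 = ∑ i, a i ^ 2 + 2 * ∑ i, ∑ j, if i < j then a i * a j else 0 := by
  have hsplit : ∀ i j, a i * a j = ((if i = j then a i * a j else 0) +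
      (if i < j then a i * a j else 0)) + (if j < i then a j * a i else 0) := by
    intro i j
    rcases lt_trichotomy i j with h | rfl | h
    · simp [h, h.ne, h.not_gt]
    · simp
    · simp [h, h.ne', h.not_gt, mul_comm]
  calc (∑ i, a i) ^ 2 = ∑ i, ∑ j, a i * a j := by rw [sq, sum_mul_sum]
    _ = ∑ i, ∑ j, (if i = j then a i * a j else 0) + ∑ i, ∑ j, (if i < j then a i * a j else 0)
        + ∑ i, ∑ j, (if j < i then a j * a i else 0) := by
      simp only [← sum_add_distrib]
      exact sum_congr rfl fun i _ => sum_congr rfl fun j _ => hsplit i j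
    _ = _ := by
      rw [sum_comm (f := fun i j => if j < i then a j * a i else 0)]
      simp only [sum_ite_eq, mem_univ, if_true, sq]
      ring

theorem ZMod.inv_two_mul_sq_sum_sub_sum_sq {ι : Type*} [Fintype ι] [LinearOrder ι] {d : ℕ}
    (hd : Odd d) (a : ι → ZMod d) :
    (2 : ZMod d)⁻¹ * ((∑ i, a i) ^ 2 - ∑ i, a i ^ 2)
      = ∑ i, ∑ j, if i < j then a i * a j else 0 := by
  rw [sq_sum_eq_sum_sq_add_two_mul_sum_lt, add_sub_cancel_left, ← mul_assoc, mul_comm _ 2,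
    ZMod.two_mul_inv_two_of_odd hd, one_mul]

theorem sum_lt_localComp_mul {d n : ℕ} (Γ : Matrix (Fin n) (Fin n) (ZMod d)) (γ : ZMod d)
    (w : Fin n) (x : Fin n → ZMod d) :
    (∑ u, ∑ v, if u < v then localComp Γ γ w u v * x u * x v else 0)
      = γ * (∑ u, ∑ v, if u < v then (Γ u w * x u) * (Γ v w * x v) else 0)
        + ∑ u, ∑ v, if u < v then Γ u v * x u * x v else 0 := by
  simp only [mul_sum, ← sum_add_distrib]
  refine sum_congr rfl fun u _ => sum_congr rfl fun v _ => ?_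
  by_cases h : u < v
  · simp only [if_pos h, localComp, Matrix.of_apply, if_pos h.ne]
    ring
  · simp [h]

/-- The graph states of `Γ ⋆_γ w` and `Γ` differ only by a phase function of `x`
depending on `Γ` only through its `w`-th column. -/
theorem graphState_localComp_phase
    (d n : ℕ) (hodd : Odd d)
    (Γ : Matrix (Fin n) (Fin n) (ZMod d))
    (ω : ℂ) (hω : IsPrimitiveRoot ω d)
    (w : Fin n) (γ : ZMod d) (x : Fin n → ZMod d) :
    graphState d n ω (localComp Γ γ w) x
      = ω ^ ((γ * (2 : ZMod d)⁻¹ *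
            ((∑ u, Γ u w * x u) ^ 2 - ∑ u, (Γ u w) ^ 2 * (x u) ^ 2)).val)
          * graphState d n ω Γ x := by
  have : NeZero d := ⟨hodd.pos.ne'⟩
  have hphase : γ * (2 : ZMod d)⁻¹ * ((∑ u, Γ u w * x u) ^ 2 - ∑ u, Γ u w ^ 2 * x u ^ 2)
      = γ * ∑ u, ∑ v, if u < v then (Γ u w * x u) * (Γ v w * x v) else 0 := by
    simp only [← mul_pow]
    rw [mul_assoc, ZMod.inv_two_mul_sq_sum_sub_sum_sq hodd]
  rw [graphState, graphState, sum_lt_localComp_mul, pow_zmod_val_add hω.pow_eq_one, hphase]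
  ring
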